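/- arXiv:2504.05837 — 2 statements merged into one kernel-verified Lean document; each statement's English description precedes it below -/
import Mathlib

section
/- Let δ > 0. There exists a constant C > 0 depending only on δ such that for every matrix G ∈ ℝ^{3×3}, vector b ∈ ℝ³, point x ∈ ℝ³, radius r > 0, and measurable set E ⊂ B_r(x) with L³(E) ≥ δ r³, one has ‖G·+b‖_{L^∞(B_r(x))} ≤ C r^{-3/2} ‖G·+b‖_{L²(E)} and |G| ≤ C r^{-5/2} ‖G·+b‖_{L²(E)}. -/
/-!
Fix an affine function `L y = ⟪a, y⟫ + c` on `ℝⁿ`, a point `y₀` of the ball `B_r(x)` and put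
`m = |L y₀|`. If the slope is small, `‖a‖ r ≤ m / 4`, then `|L| ≥ m / 2` on the whole ball, so
`∫_E L² ≥ (m / 2)² |E|`. Otherwise the set where `|L| < t` is a slab of width `2t / ‖a‖`, which
meets the ball in volume at most `(2t / ‖a‖) (2r)ⁿ⁻¹`; for `t` a small multiple of `δ m` this is at
most `δ rⁿ / 2 ≤ |E| / 2`, so `L² ≥ t²` on half of `E`. In both cases `rⁿ L(y₀)² ≲ ∫_E L²`.
Since `|L| ≥ r ‖a‖ / 2` at one of the points `x ± (r / 2) a / ‖a‖`, this also bounds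
`r^(n+2) ‖a‖²`. Summing over the rows of `G` gives both estimates.
-/

open MeasureTheory Metric
open scoped RealInnerProductSpace

theorem volume_ball_inter_abs_mul_apply_zero_add_le {n : ℕ}
    (x : EuclideanSpace ℝ (Fin (n + 1))) {α : ℝ} (hα : 0 < α) (c t r : ℝ) :
    volume {z | z ∈ ball x r ∧ |α * z 0 + c| ≤ t} ≤
      ENNReal.ofReal (2 * t / α) * ENNReal.ofReal (2 * r) ^ n := by
  let lo : Fin (n + 1) → ℝ := Fin.cons ((-c - t) / α) fun i => x i.succ - r
  let hi : Fin (n + 1) → ℝ := Fin.cons ((-c + t) / α) fun i => x i.succ + r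
  have hsub : {z | z ∈ ball x r ∧ |α * z 0 + c| ≤ t} ⊆ WithLp.ofLp ⁻¹' Set.Icc lo hi := by
    rintro z ⟨hz, hzt⟩
    have hcoord i : |z i - x i| < r := (PiLp.dist_apply_le z x i).trans_lt (mem_ball.mp hz)
    refine ⟨Fin.cases ?_ fun i => ?_, Fin.cases ?_ fun i => ?_⟩
    all_goals simp only [lo, hi, Fin.cons_zero, Fin.cons_succ]
    · rw [div_le_iff₀ hα]; linarith [(abs_le.mp hzt).1]
    · linarith [abs_lt.mp (hcoord i.succ)]
    · rw [le_div_iff₀ hα]; linarith [(abs_le.mp hzt).2]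
    · linarith [abs_lt.mp (hcoord i.succ)]
  calc volume {z | z ∈ ball x r ∧ |α * z 0 + c| ≤ t}
      ≤ volume (WithLp.ofLp ⁻¹' Set.Icc lo hi) := measure_mono hsub
    _ = volume (Set.Icc lo hi) :=
        (PiLp.volume_preserving_ofLp _).measure_preimage measurableSet_Icc.nullMeasurableSet
    _ = ENNReal.ofReal (2 * t / α) * ENNReal.ofReal (2 * r) ^ n := by
      simp only [Real.volume_Icc_pi, Fin.prod_univ_succ, lo, hi, Fin.cons_zero, Fin.cons_succ,
        add_sub_sub_cancel, ← two_mul, Finset.prod_const, Finset.card_univ, Fintype.card_fin]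
      congr 2
      ring

theorem volume_ball_inter_abs_inner_add_le {n : ℕ} (x : EuclideanSpace ℝ (Fin (n + 1)))
    {a : EuclideanSpace ℝ (Fin (n + 1))} (ha : a ≠ 0) (c t r : ℝ) :
    volume {y | y ∈ ball x r ∧ |⟪a, y⟫ + c| ≤ t} ≤
      ENNReal.ofReal (2 * t / ‖a‖) * ENNReal.ofReal (2 * r) ^ n := by
  -- The reflection `R` exchanging `a` and `‖a‖ e₀` makes the slab orthogonal to the first axis.
  set e := EuclideanSpace.single (0 : Fin (n + 1)) ‖a‖
  set R := (ℝ ∙ (e - a))ᗮ.reflection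
  have hRe : R e = a := Submodule.reflection_sub (by simp [e])
  have hinner (y : EuclideanSpace ℝ (Fin (n + 1))) : ⟪a, y⟫ = ‖a‖ * R y 0 := by
    have : ⟪a, y⟫ = ⟪e, R y⟫ := by rw [← hRe, R.inner_map_eq_flip, Submodule.reflection_symm]
    rw [this, EuclideanSpace.inner_single_left, conj_trivial]
  have hpre : {y | y ∈ ball x r ∧ |⟪a, y⟫ + c| ≤ t} =
      R ⁻¹' {z | z ∈ ball (R x) r ∧ |‖a‖ * z 0 + c| ≤ t} := by
    ext y
    simp only [Set.mem_ofPred_eq, Set.mem_preimage, mem_ball, R.dist_map, hinner]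
  have hcont : Continuous fun z : EuclideanSpace ℝ (Fin (n + 1)) => |‖a‖ * z 0 + c| := by
    fun_prop
  have hmeas : MeasurableSet {z : EuclideanSpace ℝ (Fin (n + 1)) |
      z ∈ ball (R x) r ∧ |‖a‖ * z 0 + c| ≤ t} :=
    measurableSet_ball.inter (isClosed_le hcont continuous_const).measurableSet
  rw [hpre, R.measurePreserving.measure_preimage hmeas.nullMeasurableSet]
  exact volume_ball_inter_abs_mul_apply_zero_add_le (R x) (norm_pos_iff.mpr ha) c t r

theorem mul_sub_measureReal_le_setIntegral {X : Type*} [MeasurableSpace X] {μ : Measure X}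
    {E : Set X} {g : X → ℝ} (hE : MeasurableSet E) (hμE : μ E ≠ ⊤) (hg : ∀ x ∈ E, 0 ≤ g x)
    (hgi : IntegrableOn g E μ) {ε : ℝ} (hε : 0 ≤ ε) :
    ε * (μ.real E - μ.real {x | x ∈ E ∧ g x < ε}) ≤ ∫ x in E, g x ∂μ := by
  have hcover : E ⊆ {x | ε ≤ g x} ∩ E ∪ {x | x ∈ E ∧ g x < ε} := fun x hx =>
    (le_or_gt ε (g x)).imp (fun h => ⟨h, hx⟩) fun h => ⟨hx, h⟩
  have hfin : μ ({x | ε ≤ g x} ∩ E ∪ {x | x ∈ E ∧ g x < ε}) ≠ ⊤ :=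
    ne_top_of_le_ne_top hμE (measure_mono (Set.union_subset Set.inter_subset_right fun _ h => h.1))
  have hsplit := (measureReal_mono hcover hfin).trans (measureReal_union_le _ _)
  calc ε * (μ.real E - μ.real {x | x ∈ E ∧ g x < ε})
      ≤ ε * μ.real ({x | ε ≤ g x} ∩ E) := by gcongr; linarith
    _ = ε * (μ.restrict E).real {x | ε ≤ g x} := by rw [measureReal_restrict_apply' hE]
    _ ≤ ∫ x in E, g x ∂μ :=
        mul_meas_ge_le_integral_of_nonneg (ae_restrict_of_forall_mem hE hg) hgi ε

section AffineLowerBound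

variable {n : ℕ} {δ r c : ℝ} {a x y₀ : EuclideanSpace ℝ (Fin n)}
  {E : Set (EuclideanSpace ℝ (Fin n))}

theorem integrableOn_sq_inner_add (hE : E ⊆ ball x r) :
    IntegrableOn (fun y => (⟪a, y⟫ + c) ^ 2) E volume := by
  have hcont : Continuous fun y : EuclideanSpace ℝ (Fin n) => (⟪a, y⟫ + c) ^ 2 := by fun_prop
  exact (hcont.continuousOn.integrableOn_compact (isCompact_closedBall x r)).mono_set
    (hE.trans ball_subset_closedBall)

theorem mul_sub_measureReal_le_setIntegral_sq_inner_add (hE : MeasurableSet E)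
    (hEx : E ⊆ ball x r) (t : ℝ) :
    t ^ 2 * (volume.real E - volume.real {y | y ∈ E ∧ (⟪a, y⟫ + c) ^ 2 < t ^ 2}) ≤
      ∫ y in E, (⟪a, y⟫ + c) ^ 2 :=
  mul_sub_measureReal_le_setIntegral hE (measure_mono hEx |>.trans_lt measure_ball_lt_top).ne
    (fun _ _ => sq_nonneg _) (integrableOn_sq_inner_add hEx) (sq_nonneg t)

theorem mul_sq_le_setIntegral_sq_inner_add_of_norm_mul_le (hE : MeasurableSet E)
    (hEx : E ⊆ ball x r) (hvol : δ * r ^ n ≤ volume.real E) (hy₀ : y₀ ∈ ball x r)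
    (hslope : ‖a‖ * r ≤ |⟪a, y₀⟫ + c| / 4) :
    δ / 4 * r ^ n * (⟪a, y₀⟫ + c) ^ 2 ≤ ∫ y in E, (⟪a, y⟫ + c) ^ 2 := by
  set m := |⟪a, y₀⟫ + c|
  have hfar (y) (hy : y ∈ ball x r) : (m / 2) ^ 2 ≤ (⟪a, y⟫ + c) ^ 2 := by
    have hdist : ‖y - y₀‖ ≤ 2 * r := by
      rw [← dist_eq_norm]
      linarith [dist_triangle_right y y₀ x, mem_ball.mp hy, mem_ball.mp hy₀]
    have hdiff : |(⟪a, y⟫ + c) - (⟪a, y₀⟫ + c)| ≤ m / 2 := by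
      rw [add_sub_add_right_eq_sub, ← inner_sub_right]
      calc |⟪a, y - y₀⟫| ≤ ‖a‖ * ‖y - y₀‖ := abs_real_inner_le_norm a (y - y₀)
        _ ≤ ‖a‖ * (2 * r) := by gcongr
        _ ≤ m / 2 := by linarith
    have := abs_sub_abs_le_abs_sub (⟪a, y₀⟫ + c) (⟪a, y⟫ + c)
    rw [abs_sub_comm] at this
    rw [sq_le_sq, abs_of_nonneg (by positivity)]
    linarith
  have hempty : {y | y ∈ E ∧ (⟪a, y⟫ + c) ^ 2 < (m / 2) ^ 2} = ∅ :=
    Set.eq_empty_of_forall_notMem fun y hy => (hfar y (hEx hy.1)).not_gt hy.2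
  have hmarkov := mul_sub_measureReal_le_setIntegral_sq_inner_add (a := a) (c := c) hE hEx (m / 2)
  rw [hempty, measureReal_empty, sub_zero] at hmarkov
  calc δ / 4 * r ^ n * (⟪a, y₀⟫ + c) ^ 2 = (m / 2) ^ 2 * (δ * r ^ n) := by
        rw [← sq_abs]; ring
    _ ≤ (m / 2) ^ 2 * volume.real E := by gcongr
    _ ≤ _ := hmarkov

theorem mul_sq_le_setIntegral_sq_inner_add_of_lt_norm_mul (hδ : 0 < δ) (hr : 0 < r)
    (hE : MeasurableSet E) (hEx : E ⊆ ball x r) (hvol : δ * r ^ n ≤ volume.real E)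
    (hslope : |⟪a, y₀⟫ + c| / 4 < ‖a‖ * r) :
    δ ^ 3 / (128 * 4 ^ n) * r ^ n * (⟪a, y₀⟫ + c) ^ 2 ≤ ∫ y in E, (⟪a, y⟫ + c) ^ 2 := by
  set m := |⟪a, y₀⟫ + c|
  have ha : 0 < ‖a‖ := pos_of_mul_pos_left ((by positivity : 0 ≤ m / 4).trans_lt hslope) hr.le
  obtain ⟨k, rfl⟩ : ∃ k, n = k + 1 := Nat.exists_eq_succ_of_ne_zero fun hn => by
    subst hn; exact ha.ne' (by simp [Subsingleton.elim a 0])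
  set t := δ * m / (8 * 2 ^ (k + 1))
  have hslab : volume.real {y | y ∈ E ∧ (⟪a, y⟫ + c) ^ 2 < t ^ 2} ≤ δ * r ^ (k + 1) / 2 := by
    have hsub : {y | y ∈ E ∧ (⟪a, y⟫ + c) ^ 2 < t ^ 2} ⊆
        {y | y ∈ ball x r ∧ |⟪a, y⟫ + c| ≤ t} :=
      fun y ⟨hyE, hyt⟩ => ⟨hEx hyE, (abs_lt_of_sq_lt_sq hyt (by positivity)).le⟩
    have hbound := volume_ball_inter_abs_inner_add_le x (norm_pos_iff.mp ha) c t r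
    rw [← ENNReal.ofReal_pow (by positivity), ← ENNReal.ofReal_mul (by positivity)] at hbound
    calc volume.real {y | y ∈ E ∧ (⟪a, y⟫ + c) ^ 2 < t ^ 2}
        ≤ 2 * t / ‖a‖ * (2 * r) ^ k :=
          ENNReal.toReal_le_of_le_ofReal (by positivity) ((measure_mono hsub).trans hbound)
      _ = δ * r ^ k * m / (8 * ‖a‖) := by
          simp only [t]; field_simp; ring
      _ ≤ δ * r ^ (k + 1) / 2 := by
          rw [div_le_iff₀ (by positivity), pow_succ]
          have := mul_le_mul_of_nonneg_left hslope.le (by positivity : 0 ≤ δ * r ^ k)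
          linarith
  have hfour : (4 : ℝ) ^ (k + 1) = (2 ^ (k + 1)) ^ 2 := by
    rw [← pow_mul, mul_comm, pow_mul]; norm_num
  calc δ ^ 3 / (128 * 4 ^ (k + 1)) * r ^ (k + 1) * (⟪a, y₀⟫ + c) ^ 2
      = t ^ 2 * (δ * r ^ (k + 1) / 2) := by
        rw [← sq_abs, hfour]
        simp only [t, m]; field_simp; ring
    _ ≤ t ^ 2 * (volume.real E - volume.real {y | y ∈ E ∧ (⟪a, y⟫ + c) ^ 2 < t ^ 2}) := by
        gcongr; linarith
    _ ≤ _ := mul_sub_measureReal_le_setIntegral_sq_inner_add hE hEx t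

end AffineLowerBound

theorem exists_pos_mul_sq_inner_add_le_setIntegral (n : ℕ) {δ : ℝ} (hδ : 0 < δ) :
    ∃ C > 0, ∀ (a : EuclideanSpace ℝ (Fin n)) (c : ℝ) (x : EuclideanSpace ℝ (Fin n)) (r : ℝ),
      0 < r → ∀ E : Set (EuclideanSpace ℝ (Fin n)), MeasurableSet E → E ⊆ ball x r →
        δ * r ^ n ≤ volume.real E → ∀ y ∈ ball x r,
          C * r ^ n * (⟪a, y⟫ + c) ^ 2 ≤ ∫ y in E, (⟪a, y⟫ + c) ^ 2 := by
  refine ⟨min (δ / 4) (δ ^ 3 / (128 * 4 ^ n)), by positivity,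
    fun a c x r hr E hE hEx hvol y hy => ?_⟩
  rcases le_or_gt (‖a‖ * r) (|⟪a, y⟫ + c| / 4) with hslope | hslope
  · refine le_trans ?_ (mul_sq_le_setIntegral_sq_inner_add_of_norm_mul_le hE hEx hvol hy hslope)
    gcongr
    exact min_le_left _ _
  · refine le_trans ?_
      (mul_sq_le_setIntegral_sq_inner_add_of_lt_norm_mul hδ hr hE hEx hvol hslope)
    gcongr
    exact min_le_right _ _

theorem exists_mem_ball_le_abs_inner_add {F : Type*} [NormedAddCommGroup F]
    [InnerProductSpace ℝ F] (a : F) (c : ℝ) (x : F) {r : ℝ} (hr : 0 < r) :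
    ∃ y ∈ ball x r, r * ‖a‖ / 2 ≤ |⟪a, y⟫ + c| := by
  rcases eq_or_ne a 0 with rfl | ha
  · exact ⟨x, mem_ball_self hr, by simp⟩
  have ha' : 0 < ‖a‖ := norm_pos_iff.mpr ha
  set v := (r / (2 * ‖a‖)) • a
  have hv : ‖v‖ < r := by
    rw [norm_smul, Real.norm_of_nonneg (by positivity)]
    field_simp
    linarith
  have hspread : (⟪a, x + v⟫ + c) - (⟪a, x - v⟫ + c) = r * ‖a‖ := by
    rw [inner_add_right, inner_sub_right, inner_smul_right, real_inner_self_eq_norm_sq]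
    field_simp
    ring
  rcases le_or_gt (r * ‖a‖ / 2) |⟪a, x + v⟫ + c| with h | h
  · exact ⟨x + v, by rwa [mem_ball, dist_eq_norm, add_sub_cancel_left], h⟩
  · refine ⟨x - v, by rwa [mem_ball, dist_eq_norm, sub_sub_cancel_left, norm_neg],
      le_of_not_gt fun h' => ?_⟩
    linarith [(abs_lt.mp h).2, (abs_lt.mp h').1]

theorem exists_pos_sum_sq_inner_add_le_and_sum_norm_sq_le (n : ℕ) {κ : Type*} [Fintype κ]
    {δ : ℝ} (hδ : 0 < δ) :
    ∃ C > 0, ∀ (A : κ → EuclideanSpace ℝ (Fin n)) (b : κ → ℝ) (x : EuclideanSpace ℝ (Fin n))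
      (r : ℝ), 0 < r → ∀ E : Set (EuclideanSpace ℝ (Fin n)), MeasurableSet E → E ⊆ ball x r →
        δ * r ^ n ≤ volume.real E →
        (∀ y ∈ ball x r,
          r ^ n * ∑ j, (⟪A j, y⟫ + b j) ^ 2 ≤ C * ∫ y in E, ∑ j, (⟪A j, y⟫ + b j) ^ 2) ∧
        r ^ (n + 2) * ∑ j, ‖A j‖ ^ 2 ≤ C * ∫ y in E, ∑ j, (⟪A j, y⟫ + b j) ^ 2 := by
  obtain ⟨c, hc, hlow⟩ := exists_pos_mul_sq_inner_add_le_setIntegral n hδ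
  refine ⟨4 / c, by positivity, fun A b x r hr E hE hEx hvol => ?_⟩
  set I := ∫ y in E, ∑ j, (⟪A j, y⟫ + b j) ^ 2 with hIdef
  have hI : 0 ≤ I := setIntegral_nonneg hE fun _ _ => by positivity
  have hrows (z : κ → EuclideanSpace ℝ (Fin n)) (hz : ∀ j, z j ∈ ball x r) :
      c * r ^ n * ∑ j, (⟪A j, z j⟫ + b j) ^ 2 ≤ I := by
    rw [hIdef, integral_finsetSum _ fun j _ => integrableOn_sq_inner_add hEx, Finset.mul_sum]
    exact Finset.sum_le_sum fun j _ => hlow _ _ x r hr E hE hEx hvol _ (hz j)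
  refine ⟨fun y hy => ?_, ?_⟩
  · rw [div_mul_eq_mul_div, le_div_iff₀ hc]
    linarith [hrows (fun _ => y) fun _ => hy]
  · choose z hz hzA using fun j => exists_mem_ball_le_abs_inner_add (A j) (b j) x hr
    have hpoints : r ^ 2 / 4 * ∑ j, ‖A j‖ ^ 2 ≤ ∑ j, (⟪A j, z j⟫ + b j) ^ 2 := by
      rw [Finset.mul_sum]
      refine Finset.sum_le_sum fun j _ => ?_
      rw [← sq_abs (_ + _)]
      convert pow_le_pow_left₀ (by positivity) (hzA j) 2 using 1
      ring
    rw [div_mul_eq_mul_div, le_div_iff₀ hc, pow_add]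
    linarith [hrows z hz, mul_le_mul_of_nonneg_left hpoints (by positivity : 0 ≤ c * r ^ n)]

theorem sqrt_le_sqrt_mul_rpow_mul_sqrt {S I C r : ℝ} (k : ℕ) (hr : 0 < r) (hC : 0 ≤ C)
    (hI : 0 ≤ I) (h : r ^ k * S ≤ C * I) : √S ≤ √C * r ^ (-(k : ℝ) / 2) * √I := by
  rw [Real.sqrt_le_left (by positivity), mul_pow, mul_pow, Real.sq_sqrt hC, Real.sq_sqrt hI,
    ← Real.rpow_natCast (r ^ _) 2, ← Real.rpow_mul hr.le,
    show -(k : ℝ) / 2 * (2 : ℕ) = -k by push_cast; ring, Real.rpow_neg hr.le, Real.rpow_natCast,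
    mul_right_comm, ← div_eq_mul_inv, le_div_iff₀ (by positivity)]
  linarith

theorem sum_mul_apply_eq_inner {ι : Type*} [Fintype ι] (v : ι → ℝ) (y : EuclideanSpace ℝ ι) :
    ∑ i, v i * y i = ⟪WithLp.toLp 2 v, y⟫ := by
  simp [PiLp.inner_apply, mul_comm]

/-- Estimate on affine maps (Lemma 3.1 of the paper): for every `δ > 0` there is a constant
`C > 0` such that for every matrix `G`, vector `b`, ball `B_r(x)` in `ℝ³` and measurable set
`E ⊆ B_r(x)` with `L³(E) ≥ δ r³`, the affine map `y ↦ G y + b` satisfies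
`‖G·+b‖_{L^∞(B_r(x))} ≤ C r^{-3/2} ‖G·+b‖_{L²(E)}` and `|G| ≤ C r^{-5/2} ‖G·+b‖_{L²(E)}`. -/
theorem stmt0 (δ : ℝ) (hδ : 0 < δ) :
    ∃ C : ℝ, 0 < C ∧
      ∀ (G : Matrix (Fin 3) (Fin 3) ℝ) (b x : EuclideanSpace ℝ (Fin 3)) (r : ℝ), 0 < r →
        ∀ E : Set (EuclideanSpace ℝ (Fin 3)), MeasurableSet E → E ⊆ Metric.ball x r →
          δ * r ^ 3 ≤ (volume E).toReal →
          (∀ y ∈ Metric.ball x r,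
              Real.sqrt (∑ j, (∑ i, G j i * y i + b j) ^ 2) ≤
                C * r ^ (-(3 : ℝ) / 2) *
                  Real.sqrt (∫ y in E, ∑ j, (∑ i, G j i * y i + b j) ^ 2)) ∧
            Real.sqrt (∑ j, ∑ i, (G j i) ^ 2) ≤
              C * r ^ (-(5 : ℝ) / 2) *
                Real.sqrt (∫ y in E, ∑ j, (∑ i, G j i * y i + b j) ^ 2) := by
  obtain ⟨C, hC, hbound⟩ := exists_pos_sum_sq_inner_add_le_and_sum_norm_sq_le 3 (κ := Fin 3) hδ
  refine ⟨√C, by positivity, fun G b x r hr E hE hEx hvol => ?_⟩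
  have hfrob : ∑ j, ∑ i, G j i ^ 2 = ∑ j, ‖WithLp.toLp 2 (G j)‖ ^ 2 := by
    simp [EuclideanSpace.real_norm_sq_eq]
  simp only [sum_mul_apply_eq_inner, hfrob]
  have hI : 0 ≤ ∫ y in E, ∑ j, (⟪WithLp.toLp 2 (G j), y⟫ + b j) ^ 2 :=
    setIntegral_nonneg hE fun _ _ => by positivity
  obtain ⟨hsup, hslope⟩ := hbound (fun j => WithLp.toLp 2 (G j)) b x r hr E hE hEx hvol
  refine ⟨fun y hy => ?_, ?_⟩
  · exact_mod_cast sqrt_le_sqrt_mul_rpow_mul_sqrt 3 hr hC.le hI (hsup y hy)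
  · exact_mod_cast sqrt_le_sqrt_mul_rpow_mul_sqrt 5 hr hC.le hI hslope
end

section
/- Let U ⊂ ℝ² be open and bounded, Γ_h ⊂ U with H¹(Γ_h) ≤ 2η, and consider the dyadic squares Q_h^n of sidelength Λ2^{-n}h from the mesh Q_h^n = {p + Λ2^{-n}h(−1/2,1/2)² : p ∈ Λ2^{-n}hℤ²}. For θ ∈ (0,1), define the bad squares Q_h^{bad} := {q ∈ Q_h^0 : q ⊂ U, H¹(Γ_h ∩ q') ≥ θΛh}, where q' is the concentric square with ℓ(q') = (3/2)ℓ(q). Then #Q_h^{bad} ≤ C θ⁻¹ Λ⁻¹ h⁻¹ H¹(Γ_h), and hence L²(∪_{q ∈ Q_h^{bad}} q'') ≤ C θ⁻¹ Λ h H¹(Γ_h) and H¹(∂(∪_{q∈Q_h^{bad}} q'')) ≤ C θ⁻¹ H¹(Γ_h), where q'' is the concentric square with ℓ(q'') = 21ℓ(q) and C is universal. -/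
open MeasureTheory

/-- The concentric open square of sidelength `s·Λ·h` centered at the mesh point `Λh·p`,
`p ∈ ℤ²` (so `s = 1` gives `q`, `s = 3/2` gives `q'`, `s = 21` gives `q''`). -/
def msq (Λ h s : ℝ) (p : ℤ × ℤ) : Set (ℝ × ℝ) :=
  {x | |x.1 - Λ * h * p.1| < s * Λ * h / 2 ∧ |x.2 - Λ * h * p.2| < s * Λ * h / 2}


lemma msq_eq (Λ h s : ℝ) (p : ℤ × ℤ) :
    msq Λ h s p = Set.Ioo (Λ * h * p.1 - s * Λ * h / 2) (Λ * h * p.1 + s * Λ * h / 2) ×ˢ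
      Set.Ioo (Λ * h * p.2 - s * Λ * h / 2) (Λ * h * p.2 + s * Λ * h / 2) := by
  ext x
  simp only [msq, Set.mem_setOf_eq, Set.mem_prod, Set.mem_Ioo, abs_lt]
  constructor
  · rintro ⟨⟨h1, h2⟩, h3, h4⟩
    exact ⟨⟨by linarith, by linarith⟩, by linarith, by linarith⟩
  · rintro ⟨⟨h1, h2⟩, h3, h4⟩
    exact ⟨⟨by linarith, by linarith⟩, by linarith, by linarith⟩

lemma msq_measurable (Λ h s : ℝ) (p : ℤ × ℤ) : MeasurableSet (msq Λ h s p) := by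
  rw [msq_eq]
  exact (measurableSet_Ioo.prod measurableSet_Ioo)

/-- overlap bound: at most 4 squares `q'` contain a given point. -/
lemma overlap (Λ h : ℝ) (hΛ : 0 < Λ) (hh : 0 < h) (x : ℝ × ℝ) (F : Finset (ℤ × ℤ))
    (hF : ∀ p ∈ F, x ∈ msq Λ h (3 / 2) p) : F.card ≤ 4 := by
  have hΛh : 0 < Λ * h := mul_pos hΛ hh
  set b1 : ℤ := ⌊x.1 / (Λ * h)⌋ with hb1
  set b2 : ℤ := ⌊x.2 / (Λ * h)⌋ with hb2
  have hsub : F ⊆ ({b1, b1 + 1} ×ˢ {b2, b2 + 1} : Finset (ℤ × ℤ)) := by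
    intro p hp
    obtain ⟨h1, h2⟩ := hF p hp
    have key : ∀ (y : ℝ) (n : ℤ), |y - Λ * h * n| < 3 / 2 * Λ * h / 2 →
        n = ⌊y / (Λ * h)⌋ ∨ n = ⌊y / (Λ * h)⌋ + 1 := by
      intro y n hn
      rw [abs_lt] at hn
      set m : ℤ := ⌊y / (Λ * h)⌋ with hm
      have hfl : (m : ℝ) * (Λ * h) ≤ y := by
        rw [← le_div_iff₀ hΛh]; exact Int.floor_le _
      have hfl2 : y < ((m : ℝ) + 1) * (Λ * h) := by
        rw [← div_lt_iff₀ hΛh]; exact Int.lt_floor_add_one _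
      have l1 : (m : ℝ) - 1 < n := by nlinarith [hn.1, hn.2]
      have l2 : (n : ℝ) < m + 2 := by nlinarith [hn.1, hn.2]
      have l1' : m - 1 < n := by exact_mod_cast l1
      have l2' : n < m + 2 := by exact_mod_cast l2
      omega
    have k1 := key x.1 p.1 h1
    have k2 := key x.2 p.2 h2
    simp only [Finset.mem_product, Finset.mem_insert, Finset.mem_singleton]
    exact ⟨by rw [hb1]; tauto, by rw [hb2]; tauto⟩
  calc F.card ≤ _ := Finset.card_le_card hsub
    _ ≤ 4 := by
        rw [Finset.card_product]
        have : ∀ a : ℤ, ({a, a + 1} : Finset ℤ).card ≤ 2 := fun a =>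
          (Finset.card_insert_le _ _).trans (by simp)
        calc ({b1, b1+1} : Finset ℤ).card * ({b2, b2+1} : Finset ℤ).card ≤ 2 * 2 :=
              Nat.mul_le_mul (this b1) (this b2)
          _ = 4 := rfl

lemma seg_vert (a c d : ℝ) : μH[1] (({a} : Set ℝ) ×ˢ Set.Icc c d) ≤ ENNReal.ofReal (d - c) := by
  rw [Set.singleton_prod]
  calc μH[1] (Prod.mk a '' Set.Icc c d)
      ≤ (1 : NNReal) ^ (1 : ℝ) * μH[1] (Set.Icc c d) :=
        (LipschitzWith.prodMk_left a).hausdorffMeasure_image_le zero_le_one _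
    _ = μH[1] (Set.Icc c d) := by simp
    _ = volume (Set.Icc c d) := by rw [MeasureTheory.hausdorffMeasure_real]
    _ = ENNReal.ofReal (d - c) := Real.volume_Icc

lemma seg_horiz (b c d : ℝ) : μH[1] (Set.Icc c d ×ˢ ({b} : Set ℝ)) ≤ ENNReal.ofReal (d - c) := by
  rw [Set.prod_singleton]
  calc μH[1] ((fun x => (x, b)) '' Set.Icc c d)
      ≤ (1 : NNReal) ^ (1 : ℝ) * μH[1] (Set.Icc c d) :=
        (LipschitzWith.prodMk_right b).hausdorffMeasure_image_le zero_le_one _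
    _ = μH[1] (Set.Icc c d) := by simp
    _ = volume (Set.Icc c d) := by rw [MeasureTheory.hausdorffMeasure_real]
    _ = ENNReal.ofReal (d - c) := Real.volume_Icc

lemma sq_frontier (a b c d : ℝ) (hab : a < b) (hcd : c < d) :
    μH[1] (frontier (Set.Ioo a b ×ˢ Set.Ioo c d) : Set (ℝ × ℝ)) ≤
      ENNReal.ofReal (b - a) + ENNReal.ofReal (b - a) +
      ENNReal.ofReal (d - c) + ENNReal.ofReal (d - c) := by
  rw [frontier_prod_eq, closure_Ioo hab.ne, closure_Ioo hcd.ne,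
    frontier_Ioo hab, frontier_Ioo hcd]
  have e1 : Set.Icc a b ×ˢ ({c, d} : Set ℝ) = Set.Icc a b ×ˢ {c} ∪ Set.Icc a b ×ˢ {d} := by
    rw [← Set.prod_union]; rfl
  have e2 : ({a, b} : Set ℝ) ×ˢ Set.Icc c d = {a} ×ˢ Set.Icc c d ∪ {b} ×ˢ Set.Icc c d := by
    rw [← Set.union_prod]; rfl
  rw [e1, e2]
  calc μH[1] ((Set.Icc a b ×ˢ {c} ∪ Set.Icc a b ×ˢ {d}) ∪
        ({a} ×ˢ Set.Icc c d ∪ {b} ×ˢ Set.Icc c d))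
      ≤ (μH[1] (Set.Icc a b ×ˢ ({c} : Set ℝ)) + μH[1] (Set.Icc a b ×ˢ ({d} : Set ℝ))) +
        (μH[1] (({a} : Set ℝ) ×ˢ Set.Icc c d) + μH[1] (({b} : Set ℝ) ×ˢ Set.Icc c d)) :=
        le_trans (measure_union_le _ _) (add_le_add (measure_union_le _ _) (measure_union_le _ _))
    _ ≤ (ENNReal.ofReal (b - a) + ENNReal.ofReal (b - a)) +
        (ENNReal.ofReal (d - c) + ENNReal.ofReal (d - c)) :=
        add_le_add (add_le_add (seg_horiz c a b) (seg_horiz d a b))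
          (add_le_add (seg_vert a c d) (seg_vert b c d))
    _ = _ := by ring

lemma keyA (Γ : Set (ℝ × ℝ)) (Λ h θ : ℝ) (hΛ : 0 < Λ) (hh : 0 < h)
    (F : Finset (ℤ × ℤ))
    (hF : ∀ p ∈ F, ENNReal.ofReal (θ * Λ * h) ≤ μH[1] (Γ ∩ msq Λ h (3 / 2) p)) :
    (F.card : ENNReal) * ENNReal.ofReal (θ * Λ * h) ≤ 4 * μH[1] Γ := by
  classical
  set ν := (μH[1] : Measure (ℝ × ℝ)).restrict Γ with hν
  have h1 : ∀ p ∈ F, ENNReal.ofReal (θ * Λ * h) ≤ ν (msq Λ h (3 / 2) p) := by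
    intro p hp
    rw [hν, Measure.restrict_apply (msq_measurable _ _ _ _), Set.inter_comm]
    exact hF p hp
  have hpt : ∀ x : ℝ × ℝ,
      ∑ p ∈ F, (msq Λ h (3 / 2) p).indicator (1 : (ℝ × ℝ) → ENNReal) x ≤ 4 := by
    intro x
    have e1 : ∑ p ∈ F, (msq Λ h (3 / 2) p).indicator (1 : (ℝ × ℝ) → ENNReal) x
        = ∑ p ∈ F.filter (fun p => x ∈ msq Λ h (3 / 2) p), 1 := by
      rw [Finset.sum_filter]
      exact Finset.sum_congr rfl fun p _ => by
        by_cases hx : x ∈ msq Λ h (3 / 2) p <;> simp [Set.indicator_apply, hx]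
    rw [e1, Finset.sum_const, nsmul_eq_mul, mul_one]
    have hc : (F.filter (fun p => x ∈ msq Λ h (3 / 2) p)).card ≤ 4 :=
      overlap Λ h hΛ hh x _ (fun p hp => (Finset.mem_filter.mp hp).2)
    calc ((F.filter (fun p => x ∈ msq Λ h (3 / 2) p)).card : ENNReal)
        ≤ ((4 : ℕ) : ENNReal) := Nat.cast_le.mpr hc
      _ = 4 := by norm_num
  calc (F.card : ENNReal) * ENNReal.ofReal (θ * Λ * h)
      = ∑ x_1 ∈ F, ENNReal.ofReal (θ * Λ * h) := by
        rw [Finset.sum_const, nsmul_eq_mul]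
    _ ≤ ∑ p ∈ F, ν (msq Λ h (3 / 2) p) := Finset.sum_le_sum h1
    _ = ∑ p ∈ F, ∫⁻ x, (msq Λ h (3 / 2) p).indicator 1 x ∂ν :=
        Finset.sum_congr rfl fun p _ =>
          (lintegral_indicator_one (msq_measurable _ _ _ _)).symm
    _ = ∫⁻ x, ∑ p ∈ F, (msq Λ h (3 / 2) p).indicator 1 x ∂ν :=
        (lintegral_finset_sum F fun p _ =>
          (measurable_const.indicator (msq_measurable _ _ _ _))).symm
    _ ≤ ∫⁻ _, 4 ∂ν := lintegral_mono hpt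
    _ = 4 * ν Set.univ := lintegral_const 4
    _ = 4 * μH[1] Γ := by rw [hν, Measure.restrict_apply_univ]

/-- Estimate on bad squares (Step 3 of the recovery-sequence construction): the number of
squares `q ∈ Q_h^0` with `q ⊆ U` and `H¹(Γ_h ∩ q') ≥ θΛh` is at most
`Cθ⁻¹Λ⁻¹h⁻¹H¹(Γ_h)`; consequently the union of the enlarged squares `q''` has area at
most `Cθ⁻¹Λh·H¹(Γ_h)` and boundary length at most `Cθ⁻¹H¹(Γ_h)`. -/
theorem stmt15 :
    ∃ C : ℝ, 0 < C ∧ ∀ (U Γ : Set (ℝ × ℝ)) (η Λ h θ : ℝ),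
      IsOpen U → Bornology.IsBounded U → Γ ⊆ U →
      0 < η → 1 ≤ Λ → 0 < h → 0 < θ → θ < 1 →
      μH[1] Γ ≤ ENNReal.ofReal (2 * η) →
      (({p : ℤ × ℤ | msq Λ h 1 p ⊆ U ∧
            ENNReal.ofReal (θ * Λ * h) ≤ μH[1] (Γ ∩ msq Λ h (3 / 2) p)}.ncard : ℝ)
          ≤ C * θ⁻¹ * Λ⁻¹ * h⁻¹ * (μH[1] Γ).toReal) ∧
        volume (⋃ p ∈ {p : ℤ × ℤ | msq Λ h 1 p ⊆ U ∧
              ENNReal.ofReal (θ * Λ * h) ≤ μH[1] (Γ ∩ msq Λ h (3 / 2) p)}, msq Λ h 21 p)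
          ≤ ENNReal.ofReal (C * θ⁻¹ * Λ * h * (μH[1] Γ).toReal) ∧
        μH[1] (frontier (⋃ p ∈ {p : ℤ × ℤ | msq Λ h 1 p ⊆ U ∧
              ENNReal.ofReal (θ * Λ * h) ≤ μH[1] (Γ ∩ msq Λ h (3 / 2) p)}, msq Λ h 21 p))
          ≤ ENNReal.ofReal (C * θ⁻¹ * (μH[1] Γ).toReal) := by
  refine ⟨1764, by norm_num, ?_⟩
  intro U Γ η Λ h θ hU hUb hΓU hη hΛ hh hθ hθ1 hΓη
  have hΛ0 : 0 < Λ := lt_of_lt_of_le one_pos hΛ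
  have hΛh : 0 < Λ * h := mul_pos hΛ0 hh
  have hθΛh : 0 < θ * Λ * h := by positivity
  set B := {p : ℤ × ℤ | msq Λ h 1 p ⊆ U ∧
      ENNReal.ofReal (θ * Λ * h) ≤ μH[1] (Γ ∩ msq Λ h (3 / 2) p)} with hBdef
  have hμfin : μH[1] Γ ≠ ⊤ := (lt_of_le_of_lt hΓη ENNReal.ofReal_lt_top).ne
  set T : ℝ := (μH[1] Γ).toReal with hTdef
  have hT : 0 ≤ T := ENNReal.toReal_nonneg
  -- real-valued counting bound for finite subsets of B
  have keyR : ∀ F : Finset (ℤ × ℤ), ↑F ⊆ B → (F.card : ℝ) * (θ * Λ * h) ≤ 4 * T := by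
    intro F hFB
    have hA := keyA Γ Λ h θ hΛ0 hh F (fun p hp => (hFB hp).2)
    have h2 : ((F.card : ENNReal) * ENNReal.ofReal (θ * Λ * h))
        = ENNReal.ofReal ((F.card : ℝ) * (θ * Λ * h)) := by
      rw [← ENNReal.ofReal_natCast F.card, ← ENNReal.ofReal_mul (by positivity)]
    rw [h2] at hA
    have h3 := ENNReal.toReal_mono (ENNReal.mul_ne_top (by norm_num) hμfin) hA
    rwa [ENNReal.toReal_ofReal (by positivity), ENNReal.toReal_mul,
      (by norm_num : ((4 : ENNReal)).toReal = 4)] at h3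
  have hBfin : B.Finite := by
    by_contra hinf
    obtain ⟨F, hFB, hFcard⟩ :=
      (Set.Infinite.exists_subset_card_eq hinf (⌈4 * T / (θ * Λ * h)⌉₊ + 1))
    have h5 : ((F.card : ℝ)) ≤ 4 * T / (θ * Λ * h) := (le_div_iff₀ hθΛh).2 (keyR F hFB)
    rw [hFcard] at h5
    have h4 : 4 * T / (θ * Λ * h) ≤ (⌈4 * T / (θ * Λ * h)⌉₊ : ℝ) := Nat.le_ceil _
    push_cast at h5
    linarith
  have hcard : (B.ncard : ℝ) * (θ * Λ * h) ≤ 4 * T := by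
    have := keyR hBfin.toFinset (by simp)
    rwa [← Set.ncard_eq_toFinset_card B hBfin] at this
  have hθinv : θ * θ⁻¹ = 1 := mul_inv_cancel₀ hθ.ne'
  have hinvpos : (0:ℝ) ≤ θ⁻¹ * Λ⁻¹ * h⁻¹ * T := by positivity
  have hinvpos2 : (0:ℝ) ≤ θ⁻¹ * T := by positivity
  refine ⟨?_, ?_, ?_⟩
  · -- counting bound
    have h5 : (B.ncard : ℝ) ≤ 4 * T / (θ * Λ * h) := (le_div_iff₀ hθΛh).2 hcard
    have e : 4 * T / (θ * Λ * h) = 4 * (θ⁻¹ * Λ⁻¹ * h⁻¹ * T) := by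
      field_simp
    calc (B.ncard : ℝ) ≤ 4 * (θ⁻¹ * Λ⁻¹ * h⁻¹ * T) := by rw [← e]; exact h5
      _ ≤ 1764 * θ⁻¹ * Λ⁻¹ * h⁻¹ * T := by nlinarith
  · -- area bound
    rw [← Set.Finite.coe_toFinset hBfin, Finset.set_biUnion_coe]
    have hv : ∀ p : ℤ × ℤ, volume (msq Λ h 21 p) = ENNReal.ofReal (441 * (Λ * h) ^ 2) := by
      intro p
      rw [msq_eq, Measure.volume_eq_prod, Measure.prod_prod, Real.volume_Ioo, Real.volume_Ioo,
        ← ENNReal.ofReal_mul (by nlinarith)]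
      congr 1; ring
    calc volume (⋃ p ∈ hBfin.toFinset, msq Λ h 21 p)
        ≤ ∑ p ∈ hBfin.toFinset, volume (msq Λ h 21 p) := measure_biUnion_finset_le _ _
      _ = (hBfin.toFinset.card : ENNReal) * ENNReal.ofReal (441 * (Λ * h) ^ 2) := by
          rw [Finset.sum_congr rfl fun p _ => hv p, Finset.sum_const, nsmul_eq_mul]
      _ = ENNReal.ofReal ((B.ncard : ℝ) * (441 * (Λ * h) ^ 2)) := by
          rw [← ENNReal.ofReal_natCast hBfin.toFinset.card,
            ← ENNReal.ofReal_mul (by positivity), Set.ncard_eq_toFinset_card B hBfin]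
      _ ≤ ENNReal.ofReal (1764 * θ⁻¹ * Λ * h * T) := by
          apply ENNReal.ofReal_le_ofReal
          have hmul := mul_le_mul_of_nonneg_right hcard
            (show (0:ℝ) ≤ 441 * Λ * h * θ⁻¹ by positivity)
          have e1 : (B.ncard : ℝ) * (θ * Λ * h) * (441 * Λ * h * θ⁻¹)
              = (B.ncard : ℝ) * (441 * (Λ * h) ^ 2) * (θ * θ⁻¹) := by ring
          have e2 : 4 * T * (441 * Λ * h * θ⁻¹) = 1764 * θ⁻¹ * Λ * h * T := by ring
          rw [e1, hθinv, mul_one, e2] at hmul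
          exact hmul
  · -- perimeter bound
    rw [← Set.Finite.coe_toFinset hBfin, Finset.set_biUnion_coe]
    set F := hBfin.toFinset with hF
    have hopen : ∀ p : ℤ × ℤ, IsOpen (msq Λ h 21 p) := fun p => by
      rw [msq_eq]; exact isOpen_Ioo.prod isOpen_Ioo
    have hsub : frontier (⋃ p ∈ F, msq Λ h 21 p) ⊆ ⋃ p ∈ F, frontier (msq Λ h 21 p) := by
      have hUopen : IsOpen (⋃ p ∈ F, msq Λ h 21 p) := isOpen_biUnion fun p _ => hopen p
      rw [hUopen.frontier_eq]
      intro x hx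
      obtain ⟨hx1, hx2⟩ := hx
      rw [Finset.closure_biUnion] at hx1
      rw [Set.mem_iUnion₂] at hx1 ⊢
      obtain ⟨p, hp, hxc⟩ := hx1
      refine ⟨p, hp, ?_⟩
      rw [(hopen p).frontier_eq]
      exact ⟨hxc, fun hxm => hx2 (Set.mem_biUnion hp hxm)⟩
    have hfr : ∀ p : ℤ × ℤ, μH[1] (frontier (msq Λ h 21 p)) ≤ ENNReal.ofReal (84 * (Λ * h)) := by
      intro p
      rw [msq_eq]
      refine (sq_frontier _ _ _ _ (by nlinarith) (by nlinarith)).trans ?_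
      have e : ∀ c : ℝ, (c + 21 * Λ * h / 2) - (c - 21 * Λ * h / 2) = 21 * (Λ * h) := by
        intro c; ring
      rw [e, e, ← ENNReal.ofReal_add (by positivity) (by positivity),
        ← ENNReal.ofReal_add (by positivity) (by positivity),
        ← ENNReal.ofReal_add (by positivity) (by positivity)]
      exact ENNReal.ofReal_le_ofReal (by linarith)
    calc μH[1] (frontier (⋃ p ∈ F, msq Λ h 21 p))
        ≤ μH[1] (⋃ p ∈ F, frontier (msq Λ h 21 p)) := measure_mono hsub
      _ ≤ ∑ p ∈ F, μH[1] (frontier (msq Λ h 21 p)) := measure_biUnion_finset_le _ _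
      _ ≤ ∑ p ∈ F, ENNReal.ofReal (84 * (Λ * h)) := Finset.sum_le_sum fun p _ => hfr p
      _ = ENNReal.ofReal ((B.ncard : ℝ) * (84 * (Λ * h))) := by
          rw [Finset.sum_const, nsmul_eq_mul, ← ENNReal.ofReal_natCast F.card,
            ← ENNReal.ofReal_mul (by positivity), hF, Set.ncard_eq_toFinset_card B hBfin]
      _ ≤ ENNReal.ofReal (1764 * θ⁻¹ * T) := by
          apply ENNReal.ofReal_le_ofReal
          have hmul := mul_le_mul_of_nonneg_right hcard
            (show (0:ℝ) ≤ 84 * θ⁻¹ by positivity)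
          have e1 : (B.ncard : ℝ) * (θ * Λ * h) * (84 * θ⁻¹)
              = (B.ncard : ℝ) * (84 * (Λ * h)) * (θ * θ⁻¹) := by ring
          have e2 : 4 * T * (84 * θ⁻¹) = 336 * (θ⁻¹ * T) := by ring
          rw [e1, hθinv, mul_one, e2] at hmul
          nlinarith
end
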